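/- arXiv:2307.08972 — 7 statements merged into one kernel-verified Lean document; each statement's English description precedes it below -/
import Mathlib

section
/- A point of de Sitter space is determined by its disk: if X and X' are 2×2 complex Hermitian matrices with det X = det X' = −1, and for every nonzero v ∈ ℂ² one has v⋆Xv < 0 if and only if v⋆X'v < 0, then X = X'. (Uniqueness part of Proposition 2.3: the disk Δ(X) ⊂ ℂP¹ determines X ∈ dS³.) -/
open Matrix Complex

lemma herm_cross (X : Matrix (Fin 2) (Fin 2) ℂ) (hX : X.IsHermitian) (v u : Fin 2 → ℂ) :
    star u ⬝ᵥ X.mulVec v = star (star v ⬝ᵥ X.mulVec u) := by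
  rw [star_dotProduct, star_mulVec, hX.eq, ← dotProduct_mulVec]

lemma expand_eps (X : Matrix (Fin 2) (Fin 2) ℂ) (hX : X.IsHermitian) (v u : Fin 2 → ℂ) (ε : ℝ) :
    (star (v + (ε:ℂ) • u) ⬝ᵥ X.mulVec (v + (ε:ℂ) • u)).re
      = (star v ⬝ᵥ X.mulVec v).re + 2*ε*(star v ⬝ᵥ X.mulVec u).re
        + ε^2 * (star u ⬝ᵥ X.mulVec u).re := by
  have hc := herm_cross X hX u v
  simp only [star_add, star_smul, mulVec_add, mulVec_smul, dotProduct_add, add_dotProduct,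
    dotProduct_smul, smul_dotProduct, hc, smul_eq_mul, star_trivial, RCLike.star_def,
    Complex.conj_ofReal]
  simp only [Complex.add_re, Complex.mul_re, Complex.ofReal_re, Complex.ofReal_im,
    Complex.conj_re, Complex.conj_im]
  ring

lemma null_prop (X X' : Matrix (Fin 2) (Fin 2) ℂ) (hX : X.IsHermitian) (hX' : X'.IsHermitian)
    (hdet : X.det = -1)
    (h : ∀ v : Fin 2 → ℂ, v ≠ 0 →
      ((star v ⬝ᵥ X.mulVec v).re < 0 ↔ (star v ⬝ᵥ X'.mulVec v).re < 0))
    (v : Fin 2 → ℂ) (hv : v ≠ 0) (h0 : (star v ⬝ᵥ X.mulVec v).re = 0) :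
    (star v ⬝ᵥ X'.mulVec v).re = 0 := by
  rcases lt_trichotomy ((star v ⬝ᵥ X'.mulVec v).re) 0 with hlt | heq | hgt
  · exact absurd ((h v hv).mpr hlt) (by intro hc; rw [h0] at hc; exact lt_irrefl 0 hc)
  · exact heq
  · exfalso
    set u : Fin 2 → ℂ := X.mulVec v with hu
    have hXinv : Invertible X := X.invertibleOfIsUnitDet (by rw [hdet]; exact isUnit_one.neg)
    have hune : u ≠ 0 := by
      intro h0u
      exact hv (X.mulVec_injective_of_invertible (by simpa [hu] using h0u))
    have hcross : star v ⬝ᵥ X.mulVec u = star u ⬝ᵥ u := by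
      rw [dotProduct_mulVec, ← hX.eq, ← star_mulVec]
    set N : ℝ := (star u ⬝ᵥ u).re with hN
    have hNpos : 0 < N := by
      have hNe : N = normSq (u 0) + normSq (u 1) := by
        simp [hN, dotProduct, Fin.sum_univ_two, Complex.normSq_apply, Complex.mul_re]
      by_contra hc
      push_neg at hc
      rw [hNe] at hc
      have h00 : u 0 = 0 := normSq_eq_zero.mp
        (le_antisymm (by linarith [normSq_nonneg (u 1)]) (normSq_nonneg _))
      have h11 : u 1 = 0 := normSq_eq_zero.mp
        (le_antisymm (by linarith [normSq_nonneg (u 0)]) (normSq_nonneg _))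
      exact hune (funext fun i => by fin_cases i <;> simpa using by first | exact h00 | exact h11)
    set M : ℝ := (star u ⬝ᵥ X.mulVec u).re with hM
    set R : ℝ := (star v ⬝ᵥ X'.mulVec u).re with hR
    set M' : ℝ := (star u ⬝ᵥ X'.mulVec u).re with hM'
    set P : ℝ := (star v ⬝ᵥ X'.mulVec v).re with hP
    set ε : ℝ := min 1 (min (N/(|M|+1)) (P/(2*|R|+|M'|+1))) with hε
    have hεpos : 0 < ε := by
      apply lt_min (by norm_num)
      apply lt_min
      · positivity
      · positivity
    have hε1 : ε ≤ 1 := min_le_left _ _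
    have hεN : ε * (|M|+1) ≤ N := by
      have hle : ε ≤ N/(|M|+1) := (min_le_right 1 _).trans (min_le_left _ _)
      have hd1 : (0:ℝ) < |M| + 1 := by positivity
      exact (le_div_iff₀ hd1).mp hle
    have hεP : ε * (2*|R|+|M'|+1) ≤ P := by
      have hle : ε ≤ P/(2*|R|+|M'|+1) := (min_le_right 1 _).trans (min_le_right _ _)
      have hd1 : (0:ℝ) < 2*|R|+|M'|+1 := by positivity
      exact (le_div_iff₀ hd1).mp hle
    set w : Fin 2 → ℂ := v + ((-ε : ℝ) : ℂ) • u with hw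
    have hq : (star w ⬝ᵥ X.mulVec w).re = -(2*ε*N) + ε^2 * M := by
      rw [hw, expand_eps X hX v u (-ε), h0, hcross]
      ring
    have hq' : (star w ⬝ᵥ X'.mulVec w).re = P - 2*ε*R + ε^2 * M' := by
      rw [hw, expand_eps X' hX' v u (-ε)]
      ring
    have hwlt : (star w ⬝ᵥ X.mulVec w).re < 0 := by
      rw [hq]
      have hε2 : 0 < ε^2 := pow_pos hεpos 2
      have k1 : ε * (ε * (|M|+1)) ≤ ε * N := mul_le_mul_of_nonneg_left hεN hεpos.le
      have k2 : 0 ≤ ε^2 * (|M| - M) := mul_nonneg (sq_nonneg _) (by linarith [le_abs_self M])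
      nlinarith [k1, k2, hε2]
    have hwne : w ≠ 0 := by
      intro h0w
      have : (star w ⬝ᵥ X.mulVec w).re = 0 := by rw [h0w]; simp
      rw [this] at hwlt; exact lt_irrefl 0 hwlt
    have hfin := (h w hwne).mp hwlt
    rw [hq'] at hfin
    have k1 : 0 ≤ ε * (|R| - R) := mul_nonneg hεpos.le (by linarith [le_abs_self R])
    have k2 : 0 ≤ (ε - ε^2) * |M'| := mul_nonneg (by nlinarith [hεpos, hε1]) (abs_nonneg _)
    have k3 : 0 ≤ ε^2 * (M' + |M'|) := mul_nonneg (sq_nonneg _) (by linarith [neg_abs_le M'])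
    nlinarith [k1, k2, k3, hεP, hεpos, hfin]

lemma qre (X : Matrix (Fin 2) (Fin 2) ℂ) (hX : X.IsHermitian) (u v : ℂ) :
    (star ![u,v] ⬝ᵥ X.mulVec ![u,v]).re
      = (X 0 0).re * (u.re^2 + u.im^2) + (X 1 1).re * (v.re^2 + v.im^2)
        + 2 * ((X 0 1).re * (u.re * v.re + u.im * v.im)
             - (X 0 1).im * (u.re * v.im - u.im * v.re)) := by
  have h00 : (X 0 0).im = 0 := by
    have := hX.apply 0 0
    rw [RCLike.star_def, Complex.conj_eq_iff_im] at this
    exact this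
  have h11 : (X 1 1).im = 0 := by
    have := hX.apply 1 1
    rw [RCLike.star_def, Complex.conj_eq_iff_im] at this
    exact this
  have h10 : X 1 0 = (starRingEnd ℂ) (X 0 1) := by
    have := hX.apply 1 0
    rw [RCLike.star_def] at this
    exact this.symm
  simp only [Matrix.mulVec, dotProduct, Fin.sum_univ_two, Matrix.cons_val_zero,
    Matrix.cons_val_one, Matrix.head_cons, Pi.star_apply, h10, RCLike.star_def]
  simp only [Complex.add_re, Complex.mul_re, Complex.mul_im, Complex.conj_re, Complex.conj_im,
    Complex.add_im]
  rw [h00, h11]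
  ring

lemma vne0 (x y : ℂ) (hx : x ≠ 0) : (![x,y] : Fin 2 → ℂ) ≠ 0 :=
  fun hz => hx (by simpa using congrFun hz 0)

lemma vne1 (x y : ℂ) (hy : y ≠ 0) : (![x,y] : Fin 2 → ℂ) ≠ 0 :=
  fun hz => hy (by simpa using congrFun hz 1)

lemma detR (X : Matrix (Fin 2) (Fin 2) ℂ) (hX : X.IsHermitian) (hdet : X.det = -1) :
    (X 0 0).re * (X 1 1).re - ((X 0 1).re^2 + (X 0 1).im^2) = -1 := by
  have h00 : (X 0 0).im = 0 := by
    have := hX.apply 0 0; rw [RCLike.star_def, Complex.conj_eq_iff_im] at this; exact this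
  have h11 : (X 1 1).im = 0 := by
    have := hX.apply 1 1; rw [RCLike.star_def, Complex.conj_eq_iff_im] at this; exact this
  have h10 : X 1 0 = (starRingEnd ℂ) (X 0 1) := by
    have := hX.apply 1 0; rw [RCLike.star_def] at this; exact this.symm
  rw [Matrix.det_fin_two, h10] at hdet
  have := congrArg Complex.re hdet
  simp only [Complex.sub_re, Complex.mul_re, Complex.conj_re, Complex.conj_im,
    Complex.neg_re, Complex.one_re] at this
  rw [h00, h11] at this
  linarith [this]

lemma entries_eq (X X' : Matrix (Fin 2) (Fin 2) ℂ) (hX : X.IsHermitian) (hX' : X'.IsHermitian)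
    (h00 : (X 0 0).re = (X' 0 0).re) (h11 : (X 1 1).re = (X' 1 1).re)
    (h01r : (X 0 1).re = (X' 0 1).re) (h01i : (X 0 1).im = (X' 0 1).im) : X = X' := by
  have i00 : (X 0 0).im = 0 := by
    have := hX.apply 0 0; rw [RCLike.star_def, Complex.conj_eq_iff_im] at this; exact this
  have i00' : (X' 0 0).im = 0 := by
    have := hX'.apply 0 0; rw [RCLike.star_def, Complex.conj_eq_iff_im] at this; exact this
  have i11 : (X 1 1).im = 0 := by
    have := hX.apply 1 1; rw [RCLike.star_def, Complex.conj_eq_iff_im] at this; exact this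
  have i11' : (X' 1 1).im = 0 := by
    have := hX'.apply 1 1; rw [RCLike.star_def, Complex.conj_eq_iff_im] at this; exact this
  have e01 : X 0 1 = X' 0 1 := Complex.ext h01r h01i
  have e00 : X 0 0 = X' 0 0 := Complex.ext h00 (by rw [i00, i00'])
  have e11 : X 1 1 = X' 1 1 := Complex.ext h11 (by rw [i11, i11'])
  have e10 : X 1 0 = X' 1 0 := by
    rw [← hX.apply 1 0, ← hX'.apply 1 0, e01]
  ext i j
  fin_cases i <;> fin_cases j
  · exact e00
  · exact e01
  · exact e10
  · exact e11

set_option maxHeartbeats 1000000 in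
/-- A point of de Sitter space is determined by its disk: if Hermitian `X, X'` with
`det = −1` define the same open disk in `ℂP¹`, then `X = X'`. -/
theorem deSitter_point_determined_by_disk (X X' : Matrix (Fin 2) (Fin 2) ℂ)
    (hX : X.IsHermitian) (hX' : X'.IsHermitian)
    (hdet : X.det = -1) (hdet' : X'.det = -1)
    (h : ∀ v : Fin 2 → ℂ, v ≠ 0 →
      ((star v ⬝ᵥ X.mulVec v).re < 0 ↔ (star v ⬝ᵥ X'.mulVec v).re < 0)) :
    X = X' := by
  have hdetR := detR X hX hdet
  have hdetR' := detR X' hX' hdet'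
  rcases eq_or_ne ((X 1 1).re) 0 with hd0 | hd
  · -- case d = 0
    have hQe1 : (star ![(0:ℂ), 1] ⬝ᵥ X.mulVec ![(0:ℂ), 1]).re = 0 := by
      rw [qre X hX]
      simp [hd0]
    have hd'0 : (X' 1 1).re = 0 := by
      have H := null_prop X X' hX hX' hdet h _ (vne1 0 1 one_ne_zero) hQe1
      rw [qre X' hX'] at H
      simp only [Complex.zero_re, Complex.zero_im, Complex.one_re, Complex.one_im] at H
      linear_combination H
    have hb1 : (X 0 1).re^2 + (X 0 1).im^2 = 1 := by
      linear_combination -hdetR + (X 0 0).re * hd0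
    have hb'1 : (X' 0 1).re^2 + (X' 0 1).im^2 = 1 := by
      linear_combination -hdetR' + (X' 0 0).re * hd'0
    have hQz : ∀ z : ℂ, z.re = -(X 0 0).re/2 →
        (star ![(1:ℂ), (starRingEnd ℂ) (X 0 1) * z] ⬝ᵥ
          X.mulVec ![(1:ℂ), (starRingEnd ℂ) (X 0 1) * z]).re = 0 := by
      intro z hz
      rw [qre X hX]
      simp only [Complex.one_re, Complex.one_im, Complex.mul_re, Complex.mul_im,
        Complex.conj_re, Complex.conj_im]
      linear_combination (((X 0 1).re*z.re + (X 0 1).im*z.im)^2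
        + ((X 0 1).re*z.im - (X 0 1).im*z.re)^2) * hd0 + 2*z.re*hb1 + 2*hz
    have E : ∀ z : ℂ, z.re = -(X 0 0).re/2 →
        (X' 0 0).re
        + (X' 1 1).re * (((X 0 1).re*z.re + (X 0 1).im*z.im)^2
            + ((X 0 1).re*z.im - (X 0 1).im*z.re)^2)
        + 2*((X' 0 1).re * ((X 0 1).re*z.re + (X 0 1).im*z.im)
             - (X' 0 1).im * ((X 0 1).re*z.im - (X 0 1).im*z.re)) = 0 := by
      intro z hz
      have H := null_prop X X' hX hX' hdet h _ (vne0 _ _ one_ne_zero) (hQz z hz)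
      rw [qre X' hX'] at H
      simp only [Complex.one_re, Complex.one_im, Complex.mul_re, Complex.mul_im,
        Complex.conj_re, Complex.conj_im] at H
      linear_combination H
    have E1 := E ((-(X 0 0).re/2 : ℝ) : ℂ) (by simp)
    have E2 := E (((-(X 0 0).re/2 : ℝ) : ℂ) + I) (by simp)
    have E3 := E (((-(X 0 0).re/2 : ℝ) : ℂ) - I) (by simp)
    simp only [Complex.add_re, Complex.add_im, Complex.sub_re, Complex.sub_im,
      Complex.ofReal_re, Complex.ofReal_im, Complex.I_re, Complex.I_im] at E1 E2 E3
    have S2 : (X' 0 1).re * (X 0 1).im - (X' 0 1).im * (X 0 1).re = 0 := by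
      linear_combination E2/4 - E3/4
    have S1 : (X' 0 0).re
        = (X 0 0).re * ((X' 0 1).re*(X 0 1).re + (X' 0 1).im*(X 0 1).im) := by
      linear_combination E1 - (((X 0 1).re*(-(X 0 0).re/2))^2
        + ((X 0 1).im*(-(X 0 0).re/2))^2) * hd'0
    have Rbr : (X' 0 1).re
        = ((X' 0 1).re*(X 0 1).re + (X' 0 1).im*(X 0 1).im) * (X 0 1).re := by
      linear_combination (-(X' 0 1).re) * hb1 + (X 0 1).im * S2
    have Rbi : (X' 0 1).im
        = ((X' 0 1).re*(X 0 1).re + (X' 0 1).im*(X 0 1).im) * (X 0 1).im := by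
      linear_combination (-(X' 0 1).im) * hb1 - (X 0 1).re * S2
    have hw2 : ((X' 0 1).re*(X 0 1).re + (X' 0 1).im*(X 0 1).im)^2 = 1 := by
      linear_combination hb'1
        - ((X' 0 1).re*(X 0 1).re + (X' 0 1).im*(X 0 1).im)^2 * hb1
        - ((X' 0 1).re + ((X' 0 1).re*(X 0 1).re + (X' 0 1).im*(X 0 1).im)*(X 0 1).re) * Rbr
        - ((X' 0 1).im + ((X' 0 1).re*(X 0 1).re + (X' 0 1).im*(X 0 1).im)*(X 0 1).im) * Rbi
    have hQv : (star ![(1:ℂ), (starRingEnd ℂ) (X 0 1) * ((-((X 0 0).re+1)/2 : ℝ) : ℂ)] ⬝ᵥ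
        X.mulVec ![(1:ℂ), (starRingEnd ℂ) (X 0 1) * ((-((X 0 0).re+1)/2 : ℝ) : ℂ)]).re = -1 := by
      rw [qre X hX]
      simp only [Complex.one_re, Complex.one_im, Complex.mul_re, Complex.mul_im,
        Complex.conj_re, Complex.conj_im, Complex.ofReal_re, Complex.ofReal_im]
      linear_combination (((X 0 1).re*(-((X 0 0).re+1)/2))^2
        + ((X 0 1).im*(-((X 0 0).re+1)/2))^2) * hd0 + 2*(-((X 0 0).re+1)/2)*hb1
    have hneg : (star ![(1:ℂ), (starRingEnd ℂ) (X 0 1) * ((-((X 0 0).re+1)/2 : ℝ) : ℂ)] ⬝ᵥ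
        X.mulVec ![(1:ℂ), (starRingEnd ℂ) (X 0 1) * ((-((X 0 0).re+1)/2 : ℝ) : ℂ)]).re < 0 := by
      rw [hQv]; norm_num
    have hQ'v : (star ![(1:ℂ), (starRingEnd ℂ) (X 0 1) * ((-((X 0 0).re+1)/2 : ℝ) : ℂ)] ⬝ᵥ
        X'.mulVec ![(1:ℂ), (starRingEnd ℂ) (X 0 1) * ((-((X 0 0).re+1)/2 : ℝ) : ℂ)]).re
        = -((X' 0 1).re*(X 0 1).re + (X' 0 1).im*(X 0 1).im) := by
      rw [qre X' hX']
      simp only [Complex.one_re, Complex.one_im, Complex.mul_re, Complex.mul_im,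
        Complex.conj_re, Complex.conj_im, Complex.ofReal_re, Complex.ofReal_im]
      linear_combination (((X 0 1).re*(-((X 0 0).re+1)/2))^2
        + ((X 0 1).im*(-((X 0 0).re+1)/2))^2) * hd'0 + S1
    have H := (h (![(1:ℂ), (starRingEnd ℂ) (X 0 1) * ((-((X 0 0).re+1)/2 : ℝ) : ℂ)])
      (vne0 _ _ one_ne_zero)).mp hneg
    rw [hQ'v] at H
    have hw1 : (X' 0 1).re*(X 0 1).re + (X' 0 1).im*(X 0 1).im = 1 := by
      nlinarith [hw2, H]
    have hbr : (X 0 1).re = (X' 0 1).re := by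
      linear_combination (-1)*Rbr - (X 0 1).re*hw1
    have hbi : (X 0 1).im = (X' 0 1).im := by
      linear_combination (-1)*Rbi - (X 0 1).im*hw1
    have ha : (X 0 0).re = (X' 0 0).re := by
      linear_combination (-1)*S1 - (X 0 0).re*hw1
    have hdd : (X 1 1).re = (X' 1 1).re := by rw [hd0, hd'0]
    exact entries_eq X X' hX hX' ha hdd hbr hbi
  · -- case d ≠ 0
    have hQ : ∀ σ : ℂ, σ.re^2 + σ.im^2 = 1 →
        (star ![(((X 1 1).re : ℝ) : ℂ), σ - (starRingEnd ℂ) (X 0 1)] ⬝ᵥ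
          X.mulVec ![(((X 1 1).re : ℝ) : ℂ), σ - (starRingEnd ℂ) (X 0 1)]).re = 0 := by
      intro σ hσ
      rw [qre X hX]
      simp only [Complex.ofReal_re, Complex.ofReal_im, Complex.sub_re, Complex.sub_im,
        Complex.conj_re, Complex.conj_im]
      linear_combination (X 1 1).re * hdetR + (X 1 1).re * hσ
    have E : ∀ σ : ℂ, σ.re^2 + σ.im^2 = 1 →
        (X' 0 0).re * (X 1 1).re^2
        + (X' 1 1).re * ((σ.re - (X 0 1).re)^2 + (σ.im + (X 0 1).im)^2)
        + 2*(X 1 1).re*((X' 0 1).re * (σ.re - (X 0 1).re) - (X' 0 1).im * (σ.im + (X 0 1).im)) = 0 := by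
      intro σ hσ
      have hvne : (![(((X 1 1).re : ℝ) : ℂ), σ - (starRingEnd ℂ) (X 0 1)] : Fin 2 → ℂ) ≠ 0 :=
        vne0 _ _ (Complex.ofReal_ne_zero.mpr hd)
      have H := null_prop X X' hX hX' hdet h _ hvne (hQ σ hσ)
      rw [qre X' hX'] at H
      simp only [Complex.ofReal_re, Complex.ofReal_im, Complex.sub_re, Complex.sub_im,
        Complex.conj_re, Complex.conj_im] at H
      linear_combination H
    have E1 := E 1 (by norm_num)
    have E2 := E (-1) (by norm_num)
    have E3 := E I (by norm_num)
    have E4 := E (-I) (by norm_num)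
    simp only [Complex.one_re, Complex.one_im, Complex.neg_re, Complex.neg_im,
      Complex.I_re, Complex.I_im, neg_zero] at E1 E2 E3 E4
    have T1 : (X 1 1).re * (X' 0 1).re = (X' 1 1).re * (X 0 1).re := by
      linear_combination E1/4 - E2/4
    have T2 : (X 1 1).re * (X' 0 1).im = (X' 1 1).re * (X 0 1).im := by
      linear_combination E4/4 - E3/4
    have T3 : (X' 0 0).re * (X 1 1).re = (X 0 0).re * (X' 1 1).re := by
      have key : (X 1 1).re * ((X' 0 0).re * (X 1 1).re - (X 0 0).re * (X' 1 1).re) = 0 := by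
        linear_combination E1/2 + E2/2 + 2*(X 0 1).re*T1 + 2*(X 0 1).im*T2 - (X' 1 1).re * hdetR
      rcases mul_eq_zero.mp key with h' | h'
      · exact absurd h' hd
      · linarith
    have hdd : (X' 1 1).re^2 = (X 1 1).re^2 := by
      linear_combination (X' 1 1).re^2 * hdetR - (X 1 1).re^2 * hdetR'
        + (X' 1 1).re * (X 1 1).re * T3
        - ((X 1 1).re * (X' 0 1).re + (X' 1 1).re * (X 0 1).re) * T1
        - ((X 1 1).re * (X' 0 1).im + (X' 1 1).re * (X 0 1).im) * T2
    have hd' : (X' 1 1).re = (X 1 1).re := by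
      rcases hd.lt_or_gt with hdneg | hdpos
      · -- use e1
        have hQe : (star ![(0:ℂ), 1] ⬝ᵥ X.mulVec ![(0:ℂ), 1]).re < 0 := by
          rw [qre X hX]; simp; linarith
        have H := (h _ (vne1 _ _ one_ne_zero)).mp hQe
        rw [qre X' hX'] at H
        simp only [Complex.one_re, Complex.one_im, Complex.zero_re, Complex.zero_im] at H
        nlinarith [hdd, H, hdneg]
      · -- use v0 = ![d, -conj b]
        have hQv : (star ![(((X 1 1).re : ℝ) : ℂ), -(starRingEnd ℂ) (X 0 1)] ⬝ᵥ
            X.mulVec ![(((X 1 1).re : ℝ) : ℂ), -(starRingEnd ℂ) (X 0 1)]).re = -(X 1 1).re := by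
          rw [qre X hX]
          simp only [Complex.ofReal_re, Complex.ofReal_im, Complex.neg_re, Complex.neg_im,
            Complex.conj_re, Complex.conj_im]
          linear_combination (X 1 1).re * hdetR
        have hQ'v : (star ![(((X 1 1).re : ℝ) : ℂ), -(starRingEnd ℂ) (X 0 1)] ⬝ᵥ
            X'.mulVec ![(((X 1 1).re : ℝ) : ℂ), -(starRingEnd ℂ) (X 0 1)]).re = -(X' 1 1).re := by
          rw [qre X' hX']
          simp only [Complex.ofReal_re, Complex.ofReal_im, Complex.neg_re, Complex.neg_im,
            Complex.conj_re, Complex.conj_im]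
          linear_combination (-2)*(X 0 1).re*T1 + (-2)*(X 0 1).im*T2 + (X 1 1).re*T3
            + (X' 1 1).re * hdetR
        have hneg : (star ![(((X 1 1).re : ℝ) : ℂ), -(starRingEnd ℂ) (X 0 1)] ⬝ᵥ
            X.mulVec ![(((X 1 1).re : ℝ) : ℂ), -(starRingEnd ℂ) (X 0 1)]).re < 0 := by
          rw [hQv]; linarith
        have H := (h (![(((X 1 1).re : ℝ) : ℂ), -(starRingEnd ℂ) (X 0 1)])
          (vne0 _ _ (Complex.ofReal_ne_zero.mpr hd))).mp hneg
        rw [hQ'v] at H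
        nlinarith [hdd, H, hdpos]
    have hbr : (X 0 1).re = (X' 0 1).re := by
      rw [hd'] at T1
      exact (mul_left_cancel₀ hd T1).symm
    have hbi : (X 0 1).im = (X' 0 1).im := by
      rw [hd'] at T2
      exact (mul_left_cancel₀ hd T2).symm
    have ha : (X 0 0).re = (X' 0 0).re := by
      rw [hd'] at T3
      exact (mul_right_cancel₀ hd T3).symm
    exact entries_eq X X' hX hX' ha hd'.symm hbr hbi
end

section
/- For a nonzero vector v ∈ ℂ² set w := (conj(v₁), −conj(v₀)) and Y := w·wᴴ (the rank-one positive semidefinite Hermitian matrix with Y v = 0, spanning the lightlike ray ℓ_p associated to p = [v] ∈ ℂP¹). Then for every 2×2 complex Hermitian matrix X with det X = −1, the point [v] lies on the boundary circle of Δ(X), i.e. v⋆Xv = 0, if and only if ⟨X, Y⟩ = 0. (Lemma 2.5: p ∈ ∂Δ(X) if and only if X ∈ ℓ_p^⊥.) -/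
open Matrix

/-- The Lorentzian pairing on 2×2 matrices:
`⟨X,Y⟩ = −(1/2)(det(X+Y) − det X − det Y)`. -/
noncomputable def lorentzPair (X Y : Matrix (Fin 2) (Fin 2) ℂ) : ℂ :=
  -(1/2) * ((X + Y).det - X.det - Y.det)

/-- Lemma 2.5: `p ∈ ∂Δ(X)` if and only if `X ∈ ℓ_p^⊥`, where `ℓ_p` is spanned by the
rank-one positive semidefinite Hermitian matrix `Y = w·wᴴ` with `Y v = 0`. -/
theorem boundary_point_iff_orthogonal (v : Fin 2 → ℂ) (hv : v ≠ 0)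
    (X : Matrix (Fin 2) (Fin 2) ℂ) (hX : X.IsHermitian) (hdet : X.det = -1) :
    (star v ⬝ᵥ X.mulVec v = 0 ↔
      lorentzPair X
        (Matrix.vecMulVec ![starRingEnd ℂ (v 1), -(starRingEnd ℂ (v 0))]
          (star ![starRingEnd ℂ (v 1), -(starRingEnd ℂ (v 0))])) = 0) := by
  have key : lorentzPair X
        (Matrix.vecMulVec ![starRingEnd ℂ (v 1), -(starRingEnd ℂ (v 0))]
          (star ![starRingEnd ℂ (v 1), -(starRingEnd ℂ (v 0))])) =
      -(1/2) * (star v ⬝ᵥ X.mulVec v) := by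
    simp only [lorentzPair, Matrix.det_fin_two, Matrix.vecMulVec_apply,
      Matrix.add_apply, dotProduct, mulVec, Fin.sum_univ_two, Pi.star_apply,
      Matrix.cons_val_zero, Matrix.cons_val_one, Matrix.head_cons,
      RingHom.star_def, starRingEnd_self_apply, Pi.star_def]
    ring_nf
    simp [Complex.conj_conj]
    ring
  rw [key]
  constructor
  · intro h; rw [h]; ring
  · intro h
    have := mul_eq_zero.mp h
    rcases this with h1 | h2
    · norm_num at h1
    · exact h2
end

section
/- If a, b, c, a', b', c' are real numbers such that a·z² + b·z + c = a'·(z+i)² + b'·(z+i) + c' for every complex number z, then a = 0, a' = 0, b = 0, b' = 0, and c = c'. (This is the computational core of Lemma 2.9: a quadratic vector field whose coordinate expressions have real coefficients in the two affine charts adapted to the half-planes Im z > 0 and Im z < −1 must be a real constant, hence has a double zero at ∞.) -/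
/-- Computational core of Lemma 2.9: a quadratic polynomial with real coefficients in
the charts `z` and `z + i` must be a real constant. -/
theorem real_quadratic_two_charts (a b c a' b' c' : ℝ)
    (h : ∀ z : ℂ, (a : ℂ) * z ^ 2 + (b : ℂ) * z + (c : ℂ)
        = (a' : ℂ) * (z + Complex.I) ^ 2 + (b' : ℂ) * (z + Complex.I) + (c' : ℂ)) :
    a = 0 ∧ a' = 0 ∧ b = 0 ∧ b' = 0 ∧ c = c' := by
  have h0 := h 0
  have h1 := h 1
  have h2 := h (-1)
  rw [Complex.ext_iff] at h0 h1 h2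
  simp [Complex.add_re, Complex.add_im, Complex.mul_re, Complex.mul_im,
    Complex.I_re, Complex.I_im, pow_two] at h0 h1 h2
  obtain ⟨h0r, h0i⟩ := h0
  obtain ⟨h1r, h1i⟩ := h1
  obtain ⟨h2r, h2i⟩ := h2
  refine ⟨by linarith, by linarith, by linarith, by linarith, by linarith⟩
end

section
/- Linear independence of three mutually tangent de Sitter points (from the proof of Lemma 6.1): let X₁, X₂, X₃ be 2×2 complex Hermitian matrices with det Xᵢ = −1 for each i, and det(Xᵢ + Xⱼ) = 0 for all i ≠ j (equivalently ⟨Xᵢ,Xⱼ⟩ = −1 for i ≠ j). Then X₁, X₂, X₃ are linearly independent over ℝ in the real vector space of Hermitian 2×2 matrices. -/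
open Matrix

lemma det_trace_key (A B : Matrix (Fin 2) (Fin 2) ℂ) :
    (A * B).trace - A.trace * B.trace = A.det + B.det - (A + B).det := by
  simp [Matrix.det_fin_two, Matrix.trace_fin_two, Matrix.mul_apply, Fin.sum_univ_two]
  ring

/-- Linear independence of three mutually tangent de Sitter points (from the proof of
Lemma 6.1): Hermitian `X₁, X₂, X₃` with `det Xᵢ = −1` and `det (Xᵢ + Xⱼ) = 0` for
`i ≠ j` are linearly independent over `ℝ`. -/
theorem mutually_tangent_linearIndependent (X : Fin 3 → Matrix (Fin 2) (Fin 2) ℂ)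
    (hherm : ∀ i, (X i).IsHermitian) (hdet : ∀ i, (X i).det = -1)
    (htang : ∀ i j, i ≠ j → (X i + X j).det = 0) :
    LinearIndependent ℝ X := by
  rw [Fintype.linearIndependent_iff]
  intro c hc
  have hB : ∀ i j, (X i * X j).trace - (X i).trace * (X j).trace
      = if i = j then 2 else -2 := by
    intro i j
    rw [det_trace_key]
    by_cases hij : i = j
    · subst hij
      have h2 : X i + X i = (2 : ℂ) • X i := (two_smul ℂ (X i)).symm
      rw [h2, Matrix.det_smul, hdet i]
      norm_num
    · rw [hdet i, hdet j, htang i j hij]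
      simp only [if_neg hij]
      norm_num
  have hE : ∀ j, ∑ i, (c i : ℂ) *
      ((X i * X j).trace - (X i).trace * (X j).trace) = 0 := by
    intro j
    have h2 := congrArg (fun M : Matrix (Fin 2) (Fin 2) ℂ =>
      (M * X j).trace - M.trace * (X j).trace) hc
    simp only [Finset.sum_mul, smul_mul_assoc, Matrix.trace_sum, Matrix.trace_smul,
      Matrix.zero_mul, Matrix.trace_zero, zero_mul, sub_zero, smul_eq_mul,
      Complex.real_smul] at h2
    have hre : ∑ i, (c i : ℂ) * ((X i * X j).trace - (X i).trace * (X j).trace)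
        = (∑ i, (c i : ℂ) * (X i * X j).trace)
          - ∑ i, (c i : ℂ) * (X i).trace * (X j).trace := by
      rw [← Finset.sum_sub_distrib]
      exact Finset.sum_congr rfl fun i _ => by ring
    rw [hre, h2]
  simp only [hB] at hE
  have e0 := hE 0
  have e1 := hE 1
  have e2 := hE 2
  simp only [Fin.sum_univ_three] at e0 e1 e2
  norm_num [Fin.ext_iff] at e0 e1 e2
  intro i
  have h0 : (c 0 : ℂ) = 0 := by linear_combination -e1 / 4 - e2 / 4
  have h1 : (c 1 : ℂ) = 0 := by linear_combination -e0 / 4 - e2 / 4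
  have h2 : (c 2 : ℂ) = 0 := by linear_combination -e0 / 4 - e1 / 4
  fin_cases i <;> [exact_mod_cast h0; exact_mod_cast h1; exact_mod_cast h2]
end

section
/- Existence and uniqueness of the infinitesimal motion of a triangle (Lemma 6.1): let X₁, X₂, X₃ be 2×2 complex Hermitian matrices with det Xᵢ = −1 and det(Xᵢ + Xⱼ) = 0 for i ≠ j (equivalently ⟨Xᵢ,Xⱼ⟩ = −1), and let Ẋ₁, Ẋ₂, Ẋ₃ be Hermitian 2×2 matrices satisfying ⟨Xᵢ, Ẋᵢ⟩ = 0 for each i (each Ẋᵢ is tangent to dS³ at Xᵢ) and ⟨Xᵢ, Ẋⱼ⟩ + ⟨Xⱼ, Ẋᵢ⟩ = 0 for all i ≠ j (the linearized tangency conditions). Then there exists a unique 2×2 complex matrix A with trace A = 0 such that −(Aᴴ Xᵢ + Xᵢ A) = Ẋᵢ for i = 1, 2, 3. -/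
set_option maxRecDepth 8000
set_option maxHeartbeats 1600000

open Matrix

private lemma lp_expand (P Q : Matrix (Fin 2) (Fin 2) ℂ) :
    lorentzPair P Q = (P 0 1 * Q 1 0 + P 1 0 * Q 0 1 - P 0 0 * Q 1 1 - P 1 1 * Q 0 0)/2 := by
  simp [lorentzPair, Matrix.det_fin_two]; ring

private lemma lp_comm (P Q : Matrix (Fin 2) (Fin 2) ℂ) : lorentzPair P Q = lorentzPair Q P := by
  rw [lp_expand, lp_expand]; ring

private lemma lp_self (P : Matrix (Fin 2) (Fin 2) ℂ) : lorentzPair P P = -P.det := by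
  rw [lp_expand, Matrix.det_fin_two]; ring

private lemma lp_add_right (P Q R : Matrix (Fin 2) (Fin 2) ℂ) :
    lorentzPair P (Q + R) = lorentzPair P Q + lorentzPair P R := by
  simp [lp_expand]; ring

private lemma lp_sub_right (P Q R : Matrix (Fin 2) (Fin 2) ℂ) :
    lorentzPair P (Q - R) = lorentzPair P Q - lorentzPair P R := by
  simp [lp_expand]; ring

private lemma lp_smul_right (P Q : Matrix (Fin 2) (Fin 2) ℂ) (t : ℂ) :
    lorentzPair P (t • Q) = t * lorentzPair P Q := by
  simp [lp_expand]; ring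

private lemma lp_zero_left (Q : Matrix (Fin 2) (Fin 2) ℂ) : lorentzPair 0 Q = 0 := by
  simp [lp_expand]

private lemma lp_real (P Q : Matrix (Fin 2) (Fin 2) ℂ) (hP : Pᴴ = P) (hQ : Qᴴ = Q) :
    star (lorentzPair P Q) = lorentzPair P Q := by
  have p01 : star (P 0 1) = P 1 0 := congrFun (congrFun hP 1) 0
  have p10 : star (P 1 0) = P 0 1 := congrFun (congrFun hP 0) 1
  have p00 : star (P 0 0) = P 0 0 := congrFun (congrFun hP 0) 0
  have p11 : star (P 1 1) = P 1 1 := congrFun (congrFun hP 1) 1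
  have q01 : star (Q 0 1) = Q 1 0 := congrFun (congrFun hQ 1) 0
  have q10 : star (Q 1 0) = Q 0 1 := congrFun (congrFun hQ 0) 1
  have q00 : star (Q 0 0) = Q 0 0 := congrFun (congrFun hQ 0) 0
  have q11 : star (Q 1 1) = Q 1 1 := congrFun (congrFun hQ 1) 1
  rw [lp_expand]
  rw [star_div₀, star_sub, star_sub, star_add, StarMul.star_mul, StarMul.star_mul,
    StarMul.star_mul, StarMul.star_mul]
  rw [p01, p10, p00, p11, q01, q10, q00, q11]
  norm_num
  ring

private lemma lp_forall_zero (R : Matrix (Fin 2) (Fin 2) ℂ)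
    (h : ∀ Z, lorentzPair R Z = 0) : R = 0 := by
  have h1 := h !![0,0;1,0]
  have h2 := h !![0,1;0,0]
  have h3 := h !![1,0;0,0]
  have h4 := h !![0,0;0,1]
  rw [lp_expand] at h1 h2 h3 h4
  norm_num at h1 h2 h3 h4
  ext i j
  fin_cases i <;> fin_cases j <;> simp_all [sub_eq_zero, eq_comm]

private lemma genY (P Q Z : Matrix (Fin 2) (Fin 2) ℂ) :
    -((Q * adjugate P - P * adjugate Q) * Z + Z * (adjugate P * Q - adjugate Q * P)) =
      (4 * lorentzPair P Z) • Q - (4 * lorentzPair Q Z) • P := by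
  ext i j
  fin_cases i <;> fin_cases j <;>
    · simp [Matrix.mul_apply, Matrix.adjugate_fin_two, Fin.sum_univ_succ, lp_expand,
        Matrix.vecMul, dotProduct, Matrix.vecHead, Matrix.vecTail]
      ring

private lemma genA_conjT (P Q : Matrix (Fin 2) (Fin 2) ℂ) (hP : Pᴴ = P) (hQ : Qᴴ = Q) :
    (adjugate P * Q - adjugate Q * P)ᴴ = Q * adjugate P - P * adjugate Q := by
  rw [conjTranspose_sub, conjTranspose_mul, conjTranspose_mul, Matrix.adjugate_conjTranspose,
    Matrix.adjugate_conjTranspose, hP, hQ]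

private lemma Yterm (t : ℂ) (ht : star t = t) (P Q Z : Matrix (Fin 2) (Fin 2) ℂ)
    (hP : Pᴴ = P) (hQ : Qᴴ = Q) :
    -((t • (adjugate P * Q - adjugate Q * P))ᴴ * Z + Z * (t • (adjugate P * Q - adjugate Q * P))) =
      (4 * t * lorentzPair P Z) • Q - (4 * t * lorentzPair Q Z) • P := by
  rw [conjTranspose_smul, ht, genA_conjT P Q hP hQ, smul_mul_assoc, mul_smul_comm,
    ← smul_add, ← smul_neg, genY P Q Z]
  rw [smul_sub, smul_smul, smul_smul]
  ring_nf

private lemma trace_genA (P Q : Matrix (Fin 2) (Fin 2) ℂ) :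
    (adjugate P * Q - adjugate Q * P).trace = 0 := by
  simp [Matrix.trace, Matrix.mul_apply, Matrix.adjugate_fin_two, Fin.sum_univ_succ,
    Matrix.diag, Matrix.vecMul, dotProduct, Matrix.vecHead, Matrix.vecTail]
  ring

private lemma lp_skew (B P Q : Matrix (Fin 2) (Fin 2) ℂ) :
    lorentzPair (Bᴴ * P + P * B) Q + lorentzPair P (Bᴴ * Q + Q * B)
      = (Bᴴ.trace + B.trace) * lorentzPair P Q := by
  simp [lp_expand, Matrix.mul_apply, Matrix.conjTranspose_apply, Fin.sum_univ_succ,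
    Matrix.trace, Matrix.diag]
  ring

private lemma gram5 (u v : Fin 5 → Matrix (Fin 2) (Fin 2) ℂ) :
    (Matrix.of fun c d => lorentzPair (u c) (v d)).det = 0 := by
  have hfact : (Matrix.of fun c d => lorentzPair (u c) (v d)) =
      (Matrix.of fun (c j : Fin 5) =>
        ![-(u c) 1 1/2, (u c) 1 0/2, (u c) 0 1/2, -(u c) 0 0/2, 0] j) *
      (Matrix.of fun (j d : Fin 5) =>
        ![(v d) 0 0, (v d) 0 1, (v d) 1 0, (v d) 1 1, (0:ℂ)] j) := by
    ext c d
    simp [Matrix.mul_apply, Fin.sum_univ_five, lp_expand]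
    ring
  rw [hfact, Matrix.det_mul]
  have h0 : (Matrix.of fun (j d : Fin 5) =>
      ![(v d) 0 0, (v d) 0 1, (v d) 1 0, (v d) 1 1, (0:ℂ)] j).det = 0 :=
    Matrix.det_eq_zero_of_row_eq_zero 4 (fun j => rfl)
  rw [h0, mul_zero]

private lemma det5a (s g0 g1 g2 g3 p : ℂ) :
    (!![1,-1,-1,0,g0; -1,1,-1,0,g1; -1,-1,1,0,g2; 0,0,0,s,g3; 0,0,0,0,p] :
      Matrix (Fin 5) (Fin 5) ℂ).det = -4*s*p := by
  simp [Matrix.det_succ_row_zero, Fin.sum_univ_succ, Fin.succAbove]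
  ring

private lemma det5b (p0 p1 p2 q r : ℂ) :
    (!![1,-1,-1,0,p0; -1,1,-1,0,p1; -1,-1,1,0,p2; 0,0,0,0,q; p0,p1,p2,q,r] :
      Matrix (Fin 5) (Fin 5) ℂ).det = 4*q^2 := by
  simp [Matrix.det_succ_row_zero, Fin.sum_univ_succ, Fin.succAbove]
  ring

private lemma det4diag : (!![(-1:ℂ),0,0,0; 0,1,0,0; 0,0,1,0; 0,0,0,1] :
    Matrix (Fin 4) (Fin 4) ℂ).det = -1 := by
  simp [Matrix.det_succ_row_zero, Fin.sum_univ_succ, Fin.succAbove]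

private lemma lp_complete (e : Fin 4 → Matrix (Fin 2) (Fin 2) ℂ) (s : ℂ) (hs : s ≠ 0)
    (hG : ∀ c d, lorentzPair (e c) (e d) =
      !![1,-1,-1,0; -1,1,-1,0; -1,-1,1,0; 0,0,0,s] c d)
    (R : Matrix (Fin 2) (Fin 2) ℂ) (hR : ∀ c, lorentzPair (e c) R = 0) : R = 0 := by
  apply lp_forall_zero
  intro Z
  have h5 := gram5 ![e 0, e 1, e 2, e 3, R] ![e 0, e 1, e 2, e 3, Z]
  have heq : (Matrix.of fun c d =>
      lorentzPair (![e 0, e 1, e 2, e 3, R] c) (![e 0, e 1, e 2, e 3, Z] d)) =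
      !![1,-1,-1,0, lorentzPair (e 0) Z;
         -1,1,-1,0, lorentzPair (e 1) Z;
         -1,-1,1,0, lorentzPair (e 2) Z;
         0,0,0,s, lorentzPair (e 3) Z;
         0,0,0,0, lorentzPair R Z] := by
    ext c d
    fin_cases c <;> fin_cases d <;>
      simp [hG 0 0, hG 0 1, hG 0 2, hG 0 3, hG 1 0, hG 1 1, hG 1 2, hG 1 3,
        hG 2 0, hG 2 1, hG 2 2, hG 2 3, hG 3 0, hG 3 1, hG 3 2, hG 3 3,
        lp_comm R (e 0), lp_comm R (e 1), lp_comm R (e 2), lp_comm R (e 3), hR,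
        Matrix.vecHead, Matrix.vecTail]
  rw [heq, det5a] at h5
  have h6 : s * lorentzPair R Z = 0 := by linear_combination (-(1:ℂ)/4) * h5
  exact (mul_eq_zero.mp h6).resolve_left hs

private lemma s_ne_zero (e : Fin 4 → Matrix (Fin 2) (Fin 2) ℂ) (s : ℂ)
    (hG : ∀ c d, lorentzPair (e c) (e d) =
      !![1,-1,-1,0; -1,1,-1,0; -1,-1,1,0; 0,0,0,s] c d)
    (hW : e 3 ≠ 0) : s ≠ 0 := by
  intro hs0
  have hZ : ∃ Z, lorentzPair (e 3) Z ≠ 0 := by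
    by_contra hA
    push_neg at hA
    exact hW (lp_forall_zero _ hA)
  obtain ⟨Z, hq⟩ := hZ
  have h33 : lorentzPair (e 3) (e 3) = 0 := by rw [hG 3 3]; norm_num [hs0, Matrix.cons_val_three, Matrix.cons_val_two, Matrix.vecHead, Matrix.vecTail]
  have h5 := gram5 ![e 0, e 1, e 2, e 3, Z] ![e 0, e 1, e 2, e 3, Z]
  have heq : (Matrix.of fun c d =>
      lorentzPair (![e 0, e 1, e 2, e 3, Z] c) (![e 0, e 1, e 2, e 3, Z] d)) =
      !![1,-1,-1,0, lorentzPair (e 0) Z;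
         -1,1,-1,0, lorentzPair (e 1) Z;
         -1,-1,1,0, lorentzPair (e 2) Z;
         0,0,0,0, lorentzPair (e 3) Z;
         lorentzPair (e 0) Z, lorentzPair (e 1) Z, lorentzPair (e 2) Z,
           lorentzPair (e 3) Z, lorentzPair Z Z] := by
    ext c d
    fin_cases c <;> fin_cases d <;>
      simp [hG 0 0, hG 0 1, hG 0 2, hG 0 3, hG 1 0, hG 1 1, hG 1 2, hG 1 3,
        hG 2 0, hG 2 1, hG 2 2, hG 2 3, hG 3 0, hG 3 1, hG 3 2, h33,
        lp_comm Z (e 0), lp_comm Z (e 1), lp_comm Z (e 2), lp_comm Z (e 3),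
        Matrix.vecHead, Matrix.vecTail]
  rw [heq, det5b] at h5
  have h6 : (lorentzPair (e 3) Z)^2 = 0 := by linear_combination h5/4
  exact hq (sq_eq_zero_iff.mp h6)

private lemma lp_combo (P Q : Matrix (Fin 2) (Fin 2) ℂ) (X : Fin 3 → Matrix (Fin 2) (Fin 2) ℂ)
    (c0 c1 c2 : ℂ) (h : Q = c0 • X 0 + c1 • X 1 + c2 • X 2) :
    lorentzPair P Q = c0 * lorentzPair P (X 0) + c1 * lorentzPair P (X 1)
      + c2 * lorentzPair P (X 2) := by
  subst h
  rw [lp_add_right, lp_add_right, lp_smul_right, lp_smul_right, lp_smul_right]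

private lemma exists_W (X : Fin 3 → Matrix (Fin 2) (Fin 2) ℂ) (hH : ∀ i, (X i)ᴴ = X i)
    (hg : ∀ i j : Fin 3, lorentzPair (X i) (X j) = if i = j then 1 else -1) :
    ∃ W : Matrix (Fin 2) (Fin 2) ℂ, Wᴴ = W ∧ (∀ i, lorentzPair (X i) W = 0) ∧ W ≠ 0 := by
  classical
  set pr : Matrix (Fin 2) (Fin 2) ℂ → Matrix (Fin 2) (Fin 2) ℂ := fun Z =>
    Z + (((lorentzPair (X 1) Z + lorentzPair (X 2) Z)/2) • X 0 +
      ((lorentzPair (X 0) Z + lorentzPair (X 2) Z)/2) • X 1 +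
      ((lorentzPair (X 0) Z + lorentzPair (X 1) Z)/2) • X 2) with hpr
  have hperp : ∀ (k : Fin 3) Z, lorentzPair (X k) (pr Z) = 0 := by
    intro k Z
    simp only [hpr]
    rw [lp_add_right, lp_add_right, lp_add_right, lp_smul_right, lp_smul_right, lp_smul_right]
    fin_cases k <;> simp [hg] <;> ring
  have hherm_pr : ∀ Z, Zᴴ = Z → (pr Z)ᴴ = pr Z := by
    intro Z hZ
    have r0 := lp_real (X 0) Z (hH 0) hZ
    have r1 := lp_real (X 1) Z (hH 1) hZ
    have r2 := lp_real (X 2) Z (hH 2) hZ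
    simp only [hpr, conjTranspose_add, conjTranspose_smul, hH, hZ, star_div₀, star_add,
      r0, r1, r2, star_ofNat]
  -- Pauli matrices
  set s0 : Matrix (Fin 2) (Fin 2) ℂ := !![1,0;0,1] with hs0
  set sx : Matrix (Fin 2) (Fin 2) ℂ := !![0,1;1,0] with hsx
  set sy : Matrix (Fin 2) (Fin 2) ℂ := !![0,-Complex.I;Complex.I,0] with hsy
  set sz : Matrix (Fin 2) (Fin 2) ℂ := !![1,0;0,-1] with hsz
  have h0h : s0ᴴ = s0 := by ext i j; fin_cases i <;> fin_cases j <;> simp [hs0]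
  have hxh : sxᴴ = sx := by ext i j; fin_cases i <;> fin_cases j <;> simp [hsx]
  have hyh : syᴴ = sy := by ext i j; fin_cases i <;> fin_cases j <;> simp [hsy]
  have hzh : szᴴ = sz := by ext i j; fin_cases i <;> fin_cases j <;> simp [hsz]
  by_cases h1 : pr s0 = 0
  case neg => exact ⟨pr s0, hherm_pr s0 h0h, fun i => hperp i s0, h1⟩
  by_cases h2 : pr sx = 0
  case neg => exact ⟨pr sx, hherm_pr sx hxh, fun i => hperp i sx, h2⟩
  by_cases h3 : pr sy = 0
  case neg => exact ⟨pr sy, hherm_pr sy hyh, fun i => hperp i sy, h3⟩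
  by_cases h4 : pr sz = 0
  case neg => exact ⟨pr sz, hherm_pr sz hzh, fun i => hperp i sz, h4⟩
  -- all projections vanish: contradiction
  exfalso
  have hspan : ∀ Z : Matrix (Fin 2) (Fin 2) ℂ, pr Z = 0 →
      ∃ c0 c1 c2 : ℂ, Z = c0 • X 0 + c1 • X 1 + c2 • X 2 := by
    intro Z h
    refine ⟨-((lorentzPair (X 1) Z + lorentzPair (X 2) Z)/2),
      -((lorentzPair (X 0) Z + lorentzPair (X 2) Z)/2),
      -((lorentzPair (X 0) Z + lorentzPair (X 1) Z)/2), ?_⟩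
    simp only [hpr] at h
    have h' := eq_neg_of_add_eq_zero_left h
    exact h'.trans (by module)
  obtain ⟨aI0, aI1, aI2, hI⟩ := hspan s0 h1
  obtain ⟨ax0, ax1, ax2, hx⟩ := hspan sx h2
  obtain ⟨ay0, ay1, ay2, hy⟩ := hspan sy h3
  obtain ⟨az0, az1, az2, hz⟩ := hspan sz h4
  set σ : Fin 4 → Matrix (Fin 2) (Fin 2) ℂ := ![s0, sx, sy, sz] with hσ
  set A3 : Matrix (Fin 4) (Fin 4) ℂ := Matrix.of fun c j =>
    ![lorentzPair (σ c) (X 0), lorentzPair (σ c) (X 1), lorentzPair (σ c) (X 2), 0] j with hA3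
  set B3 : Matrix (Fin 4) (Fin 4) ℂ := Matrix.of fun j d =>
    ![![aI0, ax0, ay0, az0] d, ![aI1, ax1, ay1, az1] d, ![aI2, ax2, ay2, az2] d, 0] j with hB3
  have hfac : (Matrix.of fun c d => lorentzPair (σ c) (σ d)) = A3 * B3 := by
    ext c d
    fin_cases c <;> fin_cases d <;>
      · simp only [Matrix.of_apply, hA3, hB3, Matrix.mul_apply, Fin.sum_univ_four, hσ]
        norm_num [Matrix.cons_val_three, Matrix.cons_val_two, Matrix.vecHead, Matrix.vecTail]
        try rw [lp_combo _ _ X aI0 aI1 aI2 hI]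
        try rw [lp_combo _ _ X ax0 ax1 ax2 hx]
        try rw [lp_combo _ _ X ay0 ay1 ay2 hy]
        try rw [lp_combo _ _ X az0 az1 az2 hz]
        try ring
  have hMdiag : (Matrix.of fun c d => lorentzPair (σ c) (σ d)) =
      !![(-1:ℂ),0,0,0; 0,1,0,0; 0,0,1,0; 0,0,0,1] := by
    ext c d
    fin_cases c <;> fin_cases d <;>
      · norm_num [hσ, hs0, hsx, hsy, hsz, lp_expand, Matrix.cons_val_three, Matrix.cons_val_two,
          Matrix.vecHead, Matrix.vecTail,
          Complex.I_sq]
        try ring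
  have hdet0 : A3.det = 0 :=
    Matrix.det_eq_zero_of_column_eq_zero 3 (fun i => rfl)
  have : (-1 : ℂ) = 0 := by
    calc (-1 : ℂ) = (!![(-1:ℂ),0,0,0; 0,1,0,0; 0,0,1,0; 0,0,0,1] :
        Matrix (Fin 4) (Fin 4) ℂ).det := det4diag.symm
    _ = (Matrix.of fun c d => lorentzPair (σ c) (σ d)).det := by rw [hMdiag]
    _ = (A3 * B3).det := by rw [hfac]
    _ = 0 := by rw [Matrix.det_mul, hdet0, zero_mul]
  norm_num at this

/-- Existence and uniqueness of the infinitesimal motion of a triangle (Lemma 6.1). -/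
theorem triangle_infinitesimal_motion (X Xdot : Fin 3 → Matrix (Fin 2) (Fin 2) ℂ)
    (hherm : ∀ i, (X i).IsHermitian) (hdet : ∀ i, (X i).det = -1)
    (htang : ∀ i j, i ≠ j → (X i + X j).det = 0)
    (hdotherm : ∀ i, (Xdot i).IsHermitian)
    (htangent : ∀ i, lorentzPair (X i) (Xdot i) = 0)
    (hlin : ∀ i j, i ≠ j → lorentzPair (X i) (Xdot j) + lorentzPair (X j) (Xdot i) = 0) :
    ∃! A : Matrix (Fin 2) (Fin 2) ℂ, A.trace = 0 ∧
      ∀ i, -(Aᴴ * X i + X i * A) = Xdot i := by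
  classical
  have hH : ∀ i, (X i)ᴴ = X i := hherm
  have hdH : ∀ i, (Xdot i)ᴴ = Xdot i := hdotherm
  have hg : ∀ i j : Fin 3, lorentzPair (X i) (X j) = if i = j then 1 else -1 := by
    intro i j
    by_cases h : i = j
    · subst h; rw [if_pos rfl, lp_self, hdet i]; norm_num
    · rw [if_neg h, lorentzPair, htang i j h, hdet i, hdet j]; norm_num
  obtain ⟨W, hWh, hWperp, hWne⟩ := exists_W X hH hg
  set e : Fin 4 → Matrix (Fin 2) (Fin 2) ℂ := ![X 0, X 1, X 2, W] with he
  -- named pairing values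
  have g00 : lorentzPair (X 0) (X 0) = 1 := by simpa using hg 0 0
  have g11 : lorentzPair (X 1) (X 1) = 1 := by simpa using hg 1 1
  have g22 : lorentzPair (X 2) (X 2) = 1 := by simpa using hg 2 2
  have g01 : lorentzPair (X 0) (X 1) = -1 := by simpa using hg 0 1
  have g02 : lorentzPair (X 0) (X 2) = -1 := by simpa using hg 0 2
  have g10 : lorentzPair (X 1) (X 0) = -1 := by simpa using hg 1 0
  have g12 : lorentzPair (X 1) (X 2) = -1 := by simpa using hg 1 2
  have g20 : lorentzPair (X 2) (X 0) = -1 := by simpa using hg 2 0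
  have g21 : lorentzPair (X 2) (X 1) = -1 := by simpa using hg 2 1
  have hW0 : lorentzPair (X 0) W = 0 := hWperp 0
  have hW1 : lorentzPair (X 1) W = 0 := hWperp 1
  have hW2 : lorentzPair (X 2) W = 0 := hWperp 2
  have hW0' : lorentzPair W (X 0) = 0 := (lp_comm W (X 0)).trans (hWperp 0)
  have hW1' : lorentzPair W (X 1) = 0 := (lp_comm W (X 1)).trans (hWperp 1)
  have hW2' : lorentzPair W (X 2) = 0 := (lp_comm W (X 2)).trans (hWperp 2)
  have hG : ∀ c d, lorentzPair (e c) (e d) =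
      !![1,-1,-1,0; -1,1,-1,0; -1,-1,1,0; 0,0,0,lorentzPair W W] c d := by
    intro c d
    fin_cases c <;> fin_cases d <;>
      norm_num [he, g00, g01, g02, g10, g11, g12, g20, g21, g22,
        hW0, hW1, hW2, hW0', hW1', hW2', Matrix.vecHead, Matrix.vecTail]
  have hs : lorentzPair W W ≠ 0 := s_ne_zero e (lorentzPair W W) hG (by simp [he]; exact hWne)
  -- tangency values
  have hd0 : lorentzPair (X 0) (Xdot 0) = 0 := htangent 0
  have hd1 : lorentzPair (X 1) (Xdot 1) = 0 := htangent 1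
  have hd2 : lorentzPair (X 2) (Xdot 2) = 0 := htangent 2
  have hm10 : lorentzPair (X 1) (Xdot 0) = -lorentzPair (X 0) (Xdot 1) := by
    linear_combination hlin 0 1 (by decide)
  have hm20 : lorentzPair (X 2) (Xdot 0) = -lorentzPair (X 0) (Xdot 2) := by
    linear_combination hlin 0 2 (by decide)
  have hm21 : lorentzPair (X 2) (Xdot 1) = -lorentzPair (X 1) (Xdot 2) := by
    linear_combination hlin 1 2 (by decide)
  -- reality of the scalars
  have sm01 : star (lorentzPair (X 0) (Xdot 1)) = lorentzPair (X 0) (Xdot 1) :=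
    lp_real _ _ (hH 0) (hdH 1)
  have sm02 : star (lorentzPair (X 0) (Xdot 2)) = lorentzPair (X 0) (Xdot 2) :=
    lp_real _ _ (hH 0) (hdH 2)
  have sm12 : star (lorentzPair (X 1) (Xdot 2)) = lorentzPair (X 1) (Xdot 2) :=
    lp_real _ _ (hH 1) (hdH 2)
  have sw0 : star (lorentzPair W (Xdot 0)) = lorentzPair W (Xdot 0) :=
    lp_real _ _ hWh (hdH 0)
  have sw1 : star (lorentzPair W (Xdot 1)) = lorentzPair W (Xdot 1) :=
    lp_real _ _ hWh (hdH 1)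
  have sw2 : star (lorentzPair W (Xdot 2)) = lorentzPair W (Xdot 2) :=
    lp_real _ _ hWh (hdH 2)
  have ss : star (lorentzPair W W) = lorentzPair W W := lp_real _ _ hWh hWh
  set m01 := lorentzPair (X 0) (Xdot 1) with hm01d
  set m02 := lorentzPair (X 0) (Xdot 2) with hm02d
  set m12 := lorentzPair (X 1) (Xdot 2) with hm12d
  set w0 := lorentzPair W (Xdot 0) with hw0d
  set w1 := lorentzPair W (Xdot 1) with hw1d
  set w2 := lorentzPair W (Xdot 2) with hw2d
  set s := lorentzPair W W with hsd
  clear_value m01 m02 m12 w0 w1 w2 s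
  have st01 : star ((m01 + m02 - m12)/16) = (m01 + m02 - m12)/16 := by
    rw [star_div₀, star_sub, star_add, sm01, sm02, sm12]; norm_num
  have st02 : star ((m01 + m02 + m12)/16) = (m01 + m02 + m12)/16 := by
    rw [star_div₀, star_add, star_add, sm01, sm02, sm12]; norm_num
  have st12 : star ((m02 + m12 - m01)/16) = (m02 + m12 - m01)/16 := by
    rw [star_div₀, star_sub, star_add, sm02, sm12, sm01]; norm_num
  have st03 : star (-(w1 + w2)/(8*s)) = -(w1 + w2)/(8*s) := by
    rw [star_div₀, star_neg, star_add, sw1, sw2, StarMul.star_mul, ss]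
    norm_num [mul_comm]
  have st13 : star (-(w0 + w2)/(8*s)) = -(w0 + w2)/(8*s) := by
    rw [star_div₀, star_neg, star_add, sw0, sw2, StarMul.star_mul, ss]
    norm_num [mul_comm]
  have st23 : star (-(w0 + w1)/(8*s)) = -(w0 + w1)/(8*s) := by
    rw [star_div₀, star_neg, star_add, sw0, sw1, StarMul.star_mul, ss]
    norm_num [mul_comm]
  set A : Matrix (Fin 2) (Fin 2) ℂ :=
    ((m01 + m02 - m12)/16) • (adjugate (X 0) * X 1 - adjugate (X 1) * X 0) +
    ((m01 + m02 + m12)/16) • (adjugate (X 0) * X 2 - adjugate (X 2) * X 0) +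
    (-(w1 + w2)/(8*s)) • (adjugate (X 0) * W - adjugate W * X 0) +
    ((m02 + m12 - m01)/16) • (adjugate (X 1) * X 2 - adjugate (X 2) * X 1) +
    (-(w0 + w2)/(8*s)) • (adjugate (X 1) * W - adjugate W * X 1) +
    (-(w0 + w1)/(8*s)) • (adjugate (X 2) * W - adjugate W * X 2) with hA
  have htrA : A.trace = 0 := by
    rw [hA]
    rw [Matrix.trace_add, Matrix.trace_add, Matrix.trace_add, Matrix.trace_add,
      Matrix.trace_add, Matrix.trace_smul, Matrix.trace_smul, Matrix.trace_smul,
      Matrix.trace_smul, Matrix.trace_smul, Matrix.trace_smul,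
      trace_genA, trace_genA, trace_genA, trace_genA, trace_genA, trace_genA]
    simp
  have hadd : ∀ (M N Z : Matrix (Fin 2) (Fin 2) ℂ),
      -((M+N)ᴴ*Z + Z*(M+N)) = -(Mᴴ*Z+Z*M) + -(Nᴴ*Z+Z*N) := by
    intro M N Z; rw [conjTranspose_add]; noncomm_ring
  have hYA : ∀ Z, -(Aᴴ * Z + Z * A) =
      ((4*((m01 + m02 - m12)/16)*lorentzPair (X 0) Z) • X 1
        - (4*((m01 + m02 - m12)/16)*lorentzPair (X 1) Z) • X 0) +
      ((4*((m01 + m02 + m12)/16)*lorentzPair (X 0) Z) • X 2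
        - (4*((m01 + m02 + m12)/16)*lorentzPair (X 2) Z) • X 0) +
      ((4*(-(w1 + w2)/(8*s))*lorentzPair (X 0) Z) • W
        - (4*(-(w1 + w2)/(8*s))*lorentzPair W Z) • X 0) +
      ((4*((m02 + m12 - m01)/16)*lorentzPair (X 1) Z) • X 2
        - (4*((m02 + m12 - m01)/16)*lorentzPair (X 2) Z) • X 1) +
      ((4*(-(w0 + w2)/(8*s))*lorentzPair (X 1) Z) • W
        - (4*(-(w0 + w2)/(8*s))*lorentzPair W Z) • X 1) +
      ((4*(-(w0 + w1)/(8*s))*lorentzPair (X 2) Z) • W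
        - (4*(-(w0 + w1)/(8*s))*lorentzPair W Z) • X 2) := by
    intro Z
    rw [hA, hadd, hadd, hadd, hadd, hadd,
      Yterm _ st01 (X 0) (X 1) Z (hH 0) (hH 1),
      Yterm _ st02 (X 0) (X 2) Z (hH 0) (hH 2),
      Yterm _ st03 (X 0) W Z (hH 0) hWh,
      Yterm _ st12 (X 1) (X 2) Z (hH 1) (hH 2),
      Yterm _ st13 (X 1) W Z (hH 1) hWh,
      Yterm _ st23 (X 2) W Z (hH 2) hWh]
  have hmain : ∀ k, -(Aᴴ * X k + X k * A) = Xdot k := by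
    intro k
    rw [← sub_eq_zero]
    apply lp_complete e s hs hG
    intro c
    fin_cases c <;> fin_cases k <;>
      · rw [lp_sub_right, hYA]
        simp only [lp_add_right, lp_sub_right, lp_smul_right]
        simp only [show ((⟨0, by norm_num⟩ : Fin 3)) = 0 from rfl,
          show ((⟨1, by norm_num⟩ : Fin 3)) = 1 from rfl,
          show ((⟨2, by norm_num⟩ : Fin 3)) = 2 from rfl]
        norm_num [he, g00, g01, g02, g10, g11, g12, g20, g21, g22,
          hW0, hW1, hW2, hW0', hW1', hW2', hd0, hd1, hd2, hm10, hm20, hm21,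
          ← hm01d, ← hm02d, ← hm12d, ← hw0d, ← hw1d, ← hw2d, ← hsd,
          Matrix.vecHead, Matrix.vecTail]
        try field_simp [hs]
        try ring
  clear_value A
  refine ⟨A, ⟨htrA, hmain⟩, ?_⟩
  rintro A' ⟨htr', hA'⟩
  have hBtr : (A' - A).trace = 0 := by rw [Matrix.trace_sub, htr', htrA, sub_zero]
  have hBX : ∀ i, (A' - A)ᴴ * X i + X i * (A' - A) = 0 := by
    intro i
    have e1 : A'ᴴ * X i + X i * A' = -Xdot i := by rw [← hA' i, neg_neg]
    have e2 : Aᴴ * X i + X i * A = -Xdot i := by rw [← hmain i, neg_neg]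
    calc (A' - A)ᴴ * X i + X i * (A' - A)
        = (A'ᴴ * X i + X i * A') - (Aᴴ * X i + X i * A) := by
          rw [conjTranspose_sub]; noncomm_ring
      _ = 0 := by rw [e1, e2, sub_self]
  have hskew0 : ∀ P Q, lorentzPair ((A' - A)ᴴ * P + P * (A' - A)) Q
      + lorentzPair P ((A' - A)ᴴ * Q + Q * (A' - A)) = 0 := by
    intro P Q
    rw [lp_skew, Matrix.trace_conjTranspose, hBtr]
    simp
  have hBW : (A' - A)ᴴ * W + W * (A' - A) = 0 := by
    apply lp_complete e s hs hG
    intro c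
    fin_cases c
    · have h := hskew0 (X 0) W; rw [hBX 0, lp_zero_left] at h; simpa [he] using h
    · have h := hskew0 (X 1) W; rw [hBX 1, lp_zero_left] at h; simpa [he] using h
    · have h := hskew0 (X 2) W; rw [hBX 2, lp_zero_left] at h; simpa [he] using h
    · have h := hskew0 W W
      rw [lp_comm ((A' - A)ᴴ * W + W * (A' - A)) W] at h
      have hx : lorentzPair W ((A' - A)ᴴ * W + W * (A' - A)) = 0 := by linear_combination h/2
      simpa [he] using hx
  have hBZ : ∀ Z, (A' - A)ᴴ * Z + Z * (A' - A) = 0 := by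
    intro Z
    apply lp_complete e s hs hG
    intro c
    fin_cases c
    · have h := hskew0 (X 0) Z; rw [hBX 0, lp_zero_left] at h; simpa [he] using h
    · have h := hskew0 (X 1) Z; rw [hBX 1, lp_zero_left] at h; simpa [he] using h
    · have h := hskew0 (X 2) Z; rw [hBX 2, lp_zero_left] at h; simpa [he] using h
    · have h := hskew0 W Z; rw [hBW, lp_zero_left] at h; simpa [he] using h
  have hB1 : (A' - A)ᴴ = -(A' - A) := by
    have h := hBZ 1
    rw [mul_one, one_mul] at h
    exact eq_neg_of_add_eq_zero_left h
  have hcomm : ∀ Z, (A' - A) * Z = Z * (A' - A) := by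
    intro Z
    have h := hBZ Z
    rw [hB1, neg_mul] at h
    exact (neg_add_eq_zero.mp h)
  have hBzero : A' - A = 0 := by
    have h1 := hcomm !![(0:ℂ),1;0,0]
    have h2 := hcomm !![(0:ℂ),0;1,0]
    have k1 := congrFun (congrFun h1 0) 0
    have k2 := congrFun (congrFun h1 0) 1
    have k3 := congrFun (congrFun h2 1) 1
    have k4 := congrFun (congrFun h1 1) 1
    simp [Matrix.mul_apply, Fin.sum_univ_two, Matrix.sub_apply] at k1 k2 k3 k4
    have ktr := hBtr
    simp [Matrix.trace, Matrix.diag, Fin.sum_univ_two, Matrix.sub_apply] at ktr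
    ext i j
    fin_cases i <;> fin_cases j <;>
      simp only [Matrix.sub_apply, Matrix.zero_apply,
        show ((⟨0, by norm_num⟩ : Fin 2)) = 0 from rfl,
        show ((⟨1, by norm_num⟩ : Fin 2)) = 1 from rfl] <;>
      first
        | linear_combination k1
        | linear_combination -k1
        | linear_combination k3
        | linear_combination -k3
        | linear_combination ktr/2 + k2/2
        | linear_combination ktr/2 - k2/2
        | linear_combination k2/2 - ktr/2
        | linear_combination -k2/2 - ktr/2
        | linear_combination ktr/2 + k4/2
        | linear_combination k4
        | linear_combination -k4
  exact sub_eq_zero.mp hBzero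
end

section
/- Normal realization of tangent vectors to de Sitter space (Lemma 'A(X,Ẋ)' of Section 7): let X be a 2×2 complex Hermitian matrix with det X = −1 and let Ẋ be a Hermitian 2×2 matrix with ⟨X, Ẋ⟩ = 0 (Ẋ is tangent to dS³ at X). Then there exists a unique 2×2 complex matrix A with trace A = 0 such that Aᴴ X = X A (the projective vector field of A is normal to the boundary circle of Δ(X)) and −(Aᴴ X + X A) = Ẋ (the infinitesimal motion Y_A moves X with velocity Ẋ). In particular the evaluation map i·st(X) → T_X dS³, A ↦ Y_A(X), is a bijection. -/
open Matrix

lemma trace_adjugate_mul_eq (X Y : Matrix (Fin 2) (Fin 2) ℂ) :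
    (X.adjugate * Y).trace = (X + Y).det - X.det - Y.det := by
  simp [Matrix.det_fin_two, Matrix.adjugate_fin_two, Matrix.trace_fin_two,
    Matrix.mul_apply, Fin.sum_univ_two, Matrix.vecMul, dotProduct]
  ring

/-- Normal realization of tangent vectors to de Sitter space: every tangent vector `Ẋ`
at `X ∈ dS³` is `Y_A(X)` for a unique trace-zero `A` whose projective field is normal
to `∂Δ(X)`. -/
theorem normal_realization_of_tangent_vector (X Xdot : Matrix (Fin 2) (Fin 2) ℂ)
    (hX : X.IsHermitian) (hdet : X.det = -1)
    (hdotherm : Xdot.IsHermitian) (htangent : lorentzPair X Xdot = 0) :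
    ∃! A : Matrix (Fin 2) (Fin 2) ℂ, A.trace = 0 ∧
      Aᴴ * X = X * A ∧ -(Aᴴ * X + X * A) = Xdot := by
  have hXunit : IsUnit X.det := by rw [hdet]; exact isUnit_one.neg
  have hinv : Invertible X := X.invertibleOfIsUnitDet hXunit
  set A : Matrix (Fin 2) (Fin 2) ℂ := (1/2 : ℂ) • (X.adjugate * Xdot) with hA
  have hadjH : X.adjugateᴴ = X.adjugate := by
    rw [Matrix.adjugate_conjTranspose, hX.eq]
  have hAH : Aᴴ = (1/2 : ℂ) • (Xdot * X.adjugate) := by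
    rw [hA]
    simp [Matrix.conjTranspose_smul, Matrix.conjTranspose_mul, hadjH, hdotherm.eq]
  have hXA : X * A = (-(1/2) : ℂ) • Xdot := by
    rw [hA, Matrix.mul_smul, ← Matrix.mul_assoc, Matrix.mul_adjugate, hdet]
    simp
  have hAHX : Aᴴ * X = (-(1/2) : ℂ) • Xdot := by
    rw [hAH, Matrix.smul_mul, Matrix.mul_assoc, Matrix.adjugate_mul, hdet]
    simp
  refine ⟨A, ⟨?_, ?_, ?_⟩, ?_⟩
  · -- trace
    have h0 : (X + Xdot).det - X.det - Xdot.det = 0 := by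
      have h := htangent
      unfold lorentzPair at h
      linear_combination (-2 : ℂ) * h
    rw [hA, Matrix.trace_smul, trace_adjugate_mul_eq, h0, smul_zero]
  · rw [hXA, hAHX]
  · rw [hXA, hAHX]
    rw [← add_smul]
    norm_num
  · rintro B ⟨-, hB2, hB3⟩
    have hXB : X * B = (-(1/2) : ℂ) • Xdot := by
      have : X * B + X * B = -Xdot := by
        have h := hB3
        rw [hB2] at h
        exact neg_eq_iff_eq_neg.mp h
      have h2 : (2 : ℂ) • (X * B) = -Xdot := by
        rw [two_smul]; exact this
      calc X * B = (1/2 : ℂ) • ((2 : ℂ) • (X * B)) := by rw [smul_smul]; norm_num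
        _ = (1/2 : ℂ) • (-Xdot) := by rw [h2]
        _ = (-(1/2) : ℂ) • Xdot := by rw [smul_neg, ← neg_smul]
    exact Matrix.mul_right_injective_of_invertible X (hXB.trans hXA.symm)
end

section
/- Real–imaginary splitting of infinitesimal motions with a double zero at a tangency point (used in the proof of Proposition 6.4): let X, X' be 2×2 complex Hermitian matrices with det X = det X' = −1 such that X + X' is positive semidefinite and nonzero, and let v ∈ ℂ² be nonzero with (X + X')·v = 0 (the tangency point of the disks Δ(X) and Δ(X')). Then every 2×2 complex matrix A with trace A = 0, A² = 0 and A·v = 0 (double zero at the tangency point) can be written uniquely as A = A₁ + i·A₂ where A₁ and A₂ are trace-zero matrices satisfying A_jᴴ X + X A_j = 0 and A_jᴴ X' + X' A_j = 0 for j = 1, 2 (their projective fields are tangent to both boundary circles). -/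
open Matrix
open scoped ComplexOrder

private lemma vec_ne (v : Fin 2 → ℂ) (hv : v ≠ 0) : v 0 ≠ 0 ∨ v 1 ≠ 0 := by
  by_contra h
  push_neg at h
  apply hv
  funext i
  fin_cases i <;> simp [h.1, h.2]

/-- If the columns of `M` are parallel to `v`, `v ≠ 0` and `P *ᵥ v = 0`, then `P * M = 0`. -/
private lemma par_mul (P M : Matrix (Fin 2) (Fin 2) ℂ) (v : Fin 2 → ℂ) (hv : v ≠ 0)
    (hP : P.mulVec v = 0) (hM : ∀ j, M 1 j * v 0 = M 0 j * v 1) : P * M = 0 := by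
  ext i j
  have hi : P i 0 * v 0 + P i 1 * v 1 = 0 := by
    simpa [Matrix.mulVec, dotProduct, Fin.sum_univ_two] using congrFun hP i
  have e : (P * M) i j = P i 0 * M 0 j + P i 1 * M 1 j := by
    simp [Matrix.mul_apply, Fin.sum_univ_two]
  rw [e]
  simp only [Matrix.zero_apply]
  rcases vec_ne v hv with h0 | h1
  · have h : (P i 0 * M 0 j + P i 1 * M 1 j) * v 0 = 0 := by
      linear_combination M 0 j * hi + P i 1 * (hM j)
    exact (mul_eq_zero.mp h).resolve_right h0
  · have h : (P i 0 * M 0 j + P i 1 * M 1 j) * v 1 = 0 := by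
      linear_combination M 1 j * hi - P i 0 * (hM j)
    exact (mul_eq_zero.mp h).resolve_right h1

/-- If `w` is parallel to `v`, `v ≠ 0` and `P *ᵥ v = 0`, then `P *ᵥ w = 0`. -/
private lemma par_mulVec (P : Matrix (Fin 2) (Fin 2) ℂ) (w v : Fin 2 → ℂ) (hv : v ≠ 0)
    (hP : P.mulVec v = 0) (hw : w 1 * v 0 = w 0 * v 1) : P.mulVec w = 0 := by
  funext i
  have hi : P i 0 * v 0 + P i 1 * v 1 = 0 := by
    simpa [Matrix.mulVec, dotProduct, Fin.sum_univ_two] using congrFun hP i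
  have e : P.mulVec w i = P i 0 * w 0 + P i 1 * w 1 := by
    simp [Matrix.mulVec, dotProduct, Fin.sum_univ_two]
  rw [e]
  simp only [Pi.zero_apply]
  rcases vec_ne v hv with h0 | h1
  · have h : (P i 0 * w 0 + P i 1 * w 1) * v 0 = 0 := by
      linear_combination w 0 * hi + P i 1 * hw
    exact (mul_eq_zero.mp h).resolve_right h0
  · have h : (P i 0 * w 0 + P i 1 * w 1) * v 1 = 0 := by
      linear_combination w 1 * hi - P i 0 * hw
    exact (mul_eq_zero.mp h).resolve_right h1

/-- Real–imaginary splitting of infinitesimal motions with a double zero at the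
tangency point of two tangent disks (used in the proof of Proposition 6.4). -/
theorem double_zero_splitting (X X' : Matrix (Fin 2) (Fin 2) ℂ)
    (hX : X.IsHermitian) (hX' : X'.IsHermitian)
    (hdX : X.det = -1) (hdX' : X'.det = -1)
    (hpsd : (X + X').PosSemidef) (hne : X + X' ≠ 0)
    (v : Fin 2 → ℂ) (hv : v ≠ 0) (hker : (X + X').mulVec v = 0)
    (A : Matrix (Fin 2) (Fin 2) ℂ) (hA : A.trace = 0) (hA2 : A ^ 2 = 0)
    (hAv : A.mulVec v = 0) :
    ∃! p : Matrix (Fin 2) (Fin 2) ℂ × Matrix (Fin 2) (Fin 2) ℂ,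
      (p.1.trace = 0 ∧ p.1ᴴ * X + X * p.1 = 0 ∧ p.1ᴴ * X' + X' * p.1 = 0) ∧
      (p.2.trace = 0 ∧ p.2ᴴ * X + X * p.2 = 0 ∧ p.2ᴴ * X' + X' * p.2 = 0) ∧
      A = p.1 + Complex.I • p.2 := by
  set P : Matrix (Fin 2) (Fin 2) ℂ := X + X' with hPdef
  set B : Matrix (Fin 2) (Fin 2) ℂ := X.adjugate with hBdef
  -- basic matrix facts
  have hXB : X * B = -1 := by
    rw [hBdef, Matrix.mul_adjugate, hdX, neg_smul, one_smul]
  have hBX : B * X = -1 := by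
    rw [hBdef, Matrix.adjugate_mul, hdX, neg_smul, one_smul]
  have hBH : Bᴴ = B := by
    rw [hBdef, Matrix.adjugate_conjTranspose, hX.eq]
  have hX'eq : X' = P - X := by rw [hPdef]; abel
  -- entrywise hypotheses
  have hPH : Pᴴ = P := hX.add hX'
  have hPherm : ∀ i j, star (P j i) = P i j := by
    intro i j
    have := congrFun (congrFun hPH i) j
    simpa [Matrix.conjTranspose_apply] using this
  have e1 : P 0 0 * v 0 + P 0 1 * v 1 = 0 := by
    simpa [Matrix.mulVec, dotProduct, Fin.sum_univ_two] using congrFun hker 0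
  have e2 : P 1 0 * v 0 + P 1 1 * v 1 = 0 := by
    simpa [Matrix.mulVec, dotProduct, Fin.sum_univ_two] using congrFun hker 1
  have e1c : P 0 0 * star (v 0) + P 1 0 * star (v 1) = 0 := by
    have h := congrArg star e1
    simp only [star_add, star_mul', star_zero] at h
    rw [hPherm 0 0, hPherm 1 0] at h
    exact h
  have e2c : P 0 1 * star (v 0) + P 1 1 * star (v 1) = 0 := by
    have h := congrArg star e2
    simp only [star_add, star_mul', star_zero] at h
    rw [hPherm 0 1, hPherm 1 1] at h
    exact h
  -- determinant facts
  have edP : P 0 0 * P 1 1 - P 0 1 * P 1 0 = 0 := by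
    rw [← Matrix.det_fin_two]
    exact Matrix.exists_mulVec_eq_zero_iff.mp ⟨v, hv, hker⟩
  have edX : X 0 0 * X 1 1 - X 0 1 * X 1 0 = -1 := by
    rw [← Matrix.det_fin_two]; exact hdX
  have edX' : (P 0 0 - X 0 0) * (P 1 1 - X 1 1) - (P 0 1 - X 0 1) * (P 1 0 - X 1 0) = -1 := by
    have : X'.det = -1 := hdX'
    rw [Matrix.det_fin_two] at this
    rw [hX'eq] at this
    simpa [Matrix.sub_apply] using this
  have htr : P 1 1 * X 0 0 + P 0 0 * X 1 1 - P 0 1 * X 1 0 - P 1 0 * X 0 1 = 0 := by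
    linear_combination edP + edX - edX'
  -- the key scalar identity v* X v = 0
  have hvXv : star (v 0) * X 0 0 * v 0 + star (v 0) * X 0 1 * v 1
      + star (v 1) * X 1 0 * v 0 + star (v 1) * X 1 1 * v 1 = 0 := by
    have hPne : ∃ i j, P i j ≠ 0 := by
      by_contra h
      push_neg at h
      exact hne (by ext i j; exact h i j)
    obtain ⟨i, j, hij⟩ := hPne
    set c0 := star (v 0)
    set c1 := star (v 1)
    fin_cases i <;> fin_cases j
    · -- P 0 0 ≠ 0
      have h : P 0 0 * (c0 * X 0 0 * v 0 + c0 * X 0 1 * v 1 + c1 * X 1 0 * v 0 + c1 * X 1 1 * v 1) = 0 := by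
        linear_combination c1 * v 1 * htr + (c1 * X 1 0 + c0 * X 0 0) * e1 + X 0 1 * v 1 * e1c
          - X 0 0 * v 1 * e2c
      exact (mul_eq_zero.mp h).resolve_left hij
    · -- P 0 1 ≠ 0
      have h : P 0 1 * (c0 * X 0 0 * v 0 + c0 * X 0 1 * v 1 + c1 * X 1 0 * v 0 + c1 * X 1 1 * v 1) = 0 := by
        linear_combination -c1 * v 0 * htr + (X 0 0 * v 0 + X 0 1 * v 1) * e2c + c1 * X 1 1 * e1
          - c1 * X 0 1 * e2
      exact (mul_eq_zero.mp h).resolve_left hij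
    · -- P 1 0 ≠ 0
      have h : P 1 0 * (c0 * X 0 0 * v 0 + c0 * X 0 1 * v 1 + c1 * X 1 0 * v 0 + c1 * X 1 1 * v 1) = 0 := by
        linear_combination -v 1 * c0 * htr + (X 0 0 * c0 + X 1 0 * c1) * e2 + v 1 * X 1 1 * e1c
          - v 1 * X 1 0 * e2c
      exact (mul_eq_zero.mp h).resolve_left hij
    · -- P 1 1 ≠ 0
      have h : P 1 1 * (c0 * X 0 0 * v 0 + c0 * X 0 1 * v 1 + c1 * X 1 0 * v 0 + c1 * X 1 1 * v 1) = 0 := by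
        linear_combination c0 * v 0 * htr + (c0 * X 0 1 + c1 * X 1 1) * e2 + X 1 0 * v 0 * e2c
          - X 1 1 * v 0 * e1c
      exact (mul_eq_zero.mp h).resolve_left hij
  -- rows of A
  have r0 : A 0 0 * v 0 + A 0 1 * v 1 = 0 := by
    simpa [Matrix.mulVec, dotProduct, Fin.sum_univ_two] using congrFun hAv 0
  have r1 : A 1 0 * v 0 + A 1 1 * v 1 = 0 := by
    simpa [Matrix.mulVec, dotProduct, Fin.sum_univ_two] using congrFun hAv 1
  have htrA : A 0 0 + A 1 1 = 0 := by rw [← Matrix.trace_fin_two]; exact hA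
  -- P * A = 0
  have hPA : P * A = 0 := by
    apply par_mul P A v hv hker
    intro j
    fin_cases j
    · show A 1 0 * v 0 = A 0 0 * v 1
      linear_combination r1 - v 1 * htrA
    · show A 1 1 * v 0 = A 0 1 * v 1
      linear_combination v 0 * htrA - r0
  have hAP : Aᴴ * P = 0 := by
    have := congrArg Matrix.conjTranspose hPA
    simpa [Matrix.conjTranspose_mul, hPH] using this
  -- P * B * Aᴴ = 0
  have hψ : (![star (v 1), -star (v 0)] : Fin 2 → ℂ) ≠ 0 := by
    intro h
    apply hv
    funext i
    fin_cases i
    · have := congrFun h 1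
      simp only [Matrix.cons_val_one, Matrix.head_cons, Pi.zero_apply, neg_eq_zero] at this
      simpa using congrArg star this
    · have := congrFun h 0
      simp only [Matrix.cons_val_zero, Pi.zero_apply] at this
      simpa using congrArg star this
  have hwv : (B.mulVec ![star (v 1), -star (v 0)]) 1 * v 0
      = (B.mulVec ![star (v 1), -star (v 0)]) 0 * v 1 := by
    have hB00 : B 0 0 = X 1 1 := by rw [hBdef, Matrix.adjugate_fin_two]; simp
    have hB01 : B 0 1 = -X 0 1 := by rw [hBdef, Matrix.adjugate_fin_two]; simp
    have hB10 : B 1 0 = -X 1 0 := by rw [hBdef, Matrix.adjugate_fin_two]; simp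
    have hB11 : B 1 1 = X 0 0 := by rw [hBdef, Matrix.adjugate_fin_two]; simp
    have e0 : (B.mulVec ![star (v 1), -star (v 0)]) 0 = X 1 1 * star (v 1) + X 0 1 * star (v 0) := by
      simp [Matrix.mulVec, dotProduct, Fin.sum_univ_two, hB00, hB01]
      all_goals ring
    have e1' : (B.mulVec ![star (v 1), -star (v 0)]) 1
        = -(X 1 0 * star (v 1)) + X 0 0 * (-star (v 0)) := by
      simp [Matrix.mulVec, dotProduct, Fin.sum_univ_two, hB10, hB11]
      all_goals ring
    rw [e0, e1']
    linear_combination -hvXv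
  have hPw : P.mulVec (B.mulVec ![star (v 1), -star (v 0)]) = 0 :=
    par_mulVec P _ v hv hker hwv
  have hPBψ : (P * B).mulVec ![star (v 1), -star (v 0)] = 0 := by
    rw [← Matrix.mulVec_mulVec]; exact hPw
  have hAHcols : ∀ j, Aᴴ 1 j * (![star (v 1), -star (v 0)] : Fin 2 → ℂ) 0
      = Aᴴ 0 j * (![star (v 1), -star (v 0)] : Fin 2 → ℂ) 1 := by
    intro j
    have hrow : A j 0 * v 0 + A j 1 * v 1 = 0 := by
      simpa [Matrix.mulVec, dotProduct, Fin.sum_univ_two] using congrFun hAv j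
    have h := congrArg star hrow
    simp only [star_add, star_mul', star_zero] at h
    simp only [Matrix.conjTranspose_apply, Matrix.cons_val_zero, Matrix.cons_val_one,
      Matrix.head_cons]
    linear_combination h
  have hPBA : P * B * Aᴴ = 0 := par_mul (P * B) Aᴴ _ hψ hPBψ hAHcols
  -- the conjugation T = B * Aᴴ * X and its properties
  set T : Matrix (Fin 2) (Fin 2) ℂ := B * Aᴴ * X with hTdef
  have hPT : P * T = 0 := by
    rw [hTdef, ← Matrix.mul_assoc, ← Matrix.mul_assoc, hPBA, Matrix.zero_mul]
  have hTH : Tᴴ = X * A * B := by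
    rw [hTdef]
    simp only [Matrix.conjTranspose_mul, Matrix.conjTranspose_conjTranspose, hX.eq, hBH]
    rw [Matrix.mul_assoc]
  have hABP : X * A * B * P = 0 := by
    have := congrArg Matrix.conjTranspose hPT
    rw [Matrix.conjTranspose_mul, hTH, hPH] at this
    simpa using this
  have hTX : Tᴴ * X = -(X * A) := by
    rw [hTH, Matrix.mul_assoc (X * A) B X, hBX, Matrix.mul_neg, Matrix.mul_one]
  have hXT : X * T = -(Aᴴ * X) := by
    rw [hTdef, ← Matrix.mul_assoc, ← Matrix.mul_assoc, hXB, Matrix.neg_mul, Matrix.one_mul,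
      Matrix.neg_mul]
  have hTX' : Tᴴ * X' = X * A := by
    rw [hX'eq, Matrix.mul_sub, hTX, hTH, hABP]
    abel
  have hX'T : X' * T = Aᴴ * X := by
    rw [hX'eq, Matrix.sub_mul, hPT, hXT]
    abel
  have hAX' : Aᴴ * X' = -(Aᴴ * X) := by
    rw [hX'eq, Matrix.mul_sub, hAP]
    abel
  have hX'A : X' * A = -(X * A) := by
    rw [hX'eq, Matrix.sub_mul, hPA]
    abel
  have htrT : T.trace = 0 := by
    rw [hTdef, Matrix.trace_mul_comm, ← Matrix.mul_assoc, hXB, Matrix.neg_mul, Matrix.one_mul,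
      Matrix.trace_neg, Matrix.trace_conjTranspose, hA, star_zero, neg_zero]
  -- the two pieces
  refine ⟨⟨(1/2 : ℂ) • (A + T), (-(Complex.I)/2) • (A - T)⟩, ⟨⟨?_, ?_, ?_⟩, ⟨?_, ?_, ?_⟩, ?_⟩, ?_⟩
  · simp [Matrix.trace_smul, Matrix.trace_add, hA, htrT]
  · rw [Matrix.conjTranspose_smul, Matrix.conjTranspose_add, hTH,
      Matrix.smul_mul, Matrix.mul_smul, Matrix.add_mul, Matrix.mul_add,
      Matrix.mul_assoc (X * A) B X, hBX, hXT]
    have hs : star (1/2 : ℂ) = (1/2 : ℂ) := by norm_num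
    rw [hs]
    rw [Matrix.mul_neg, Matrix.mul_one]
    module
  · rw [Matrix.conjTranspose_smul, Matrix.conjTranspose_add, hTH,
      Matrix.smul_mul, Matrix.mul_smul, Matrix.add_mul, Matrix.mul_add,
      ← hTH, hTX', hX'T, hAX', hX'A]
    have hs : star (1/2 : ℂ) = (1/2 : ℂ) := by norm_num
    rw [hs]
    module
  · simp [Matrix.trace_smul, Matrix.trace_sub, hA, htrT]
  · rw [Matrix.conjTranspose_smul, Matrix.conjTranspose_sub,
      Matrix.smul_mul, Matrix.mul_smul, Matrix.sub_mul, Matrix.mul_sub,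
      hTX, hXT]
    have hs : star (-(Complex.I)/2) = (Complex.I/2 : ℂ) := by
      simp [star_div₀]
    rw [hs]
    module
  · rw [Matrix.conjTranspose_smul, Matrix.conjTranspose_sub,
      Matrix.smul_mul, Matrix.mul_smul, Matrix.sub_mul, Matrix.mul_sub,
      hTX', hX'T, hAX', hX'A]
    have hs : star (-(Complex.I)/2) = (Complex.I/2 : ℂ) := by
      simp [star_div₀]
    rw [hs]
    module
  · rw [smul_smul]
    have hI : Complex.I * (-(Complex.I)/2) = (1/2 : ℂ) := by
      rw [mul_comm, div_mul_eq_mul_div, neg_mul, Complex.I_mul_I, neg_neg]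
    rw [hI]
    module
  · rintro ⟨q1, q2⟩ ⟨⟨hq1t, hq1X, hq1X'⟩, ⟨hq2t, hq2X, hq2X'⟩, hqA⟩
    -- our candidates
    set A1 : Matrix (Fin 2) (Fin 2) ℂ := (1/2 : ℂ) • (A + T) with hA1def
    set A2 : Matrix (Fin 2) (Fin 2) ℂ := (-(Complex.I)/2) • (A - T) with hA2def
    have hA1X : A1ᴴ * X + X * A1 = 0 := by
      rw [hA1def, Matrix.conjTranspose_smul, Matrix.conjTranspose_add, hTH,
        Matrix.smul_mul, Matrix.mul_smul, Matrix.add_mul, Matrix.mul_add,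
        Matrix.mul_assoc (X * A) B X, hBX, hXT]
      have hs : star (1/2 : ℂ) = (1/2 : ℂ) := by norm_num
      rw [hs, Matrix.mul_neg, Matrix.mul_one]
      module
    have hA2X : A2ᴴ * X + X * A2 = 0 := by
      rw [hA2def, Matrix.conjTranspose_smul, Matrix.conjTranspose_sub,
        Matrix.smul_mul, Matrix.mul_smul, Matrix.sub_mul, Matrix.mul_sub, hTX, hXT]
      have hs : star (-(Complex.I)/2) = (Complex.I/2 : ℂ) := by simp [star_div₀]
      rw [hs]
      module
    have hsum : A = A1 + Complex.I • A2 := by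
      rw [hA1def, hA2def, smul_smul]
      have hI : Complex.I * (-(Complex.I)/2) = (1/2 : ℂ) := by
        rw [mul_comm, div_mul_eq_mul_div, neg_mul, Complex.I_mul_I, neg_neg]
      rw [hI]
      module
    -- difference
    set M : Matrix (Fin 2) (Fin 2) ℂ := q2 - A2 with hMdef
    have hMX : Mᴴ * X + X * M = 0 := by
      rw [hMdef, Matrix.conjTranspose_sub, Matrix.sub_mul, Matrix.mul_sub]
      rw [show q2ᴴ * X - A2ᴴ * X + (X * q2 - X * A2)
          = (q2ᴴ * X + X * q2) - (A2ᴴ * X + X * A2) by abel, hq2X, hA2X, sub_zero]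
    have hq1A1 : q1 - A1 = -(Complex.I • M) := by
      have h := hqA.symm.trans hsum
      rw [hMdef]
      rw [smul_sub]
      have : q1 + Complex.I • q2 = A1 + Complex.I • A2 := h
      have := sub_eq_zero.mpr this
      rw [show q1 + Complex.I • q2 - (A1 + Complex.I • A2)
          = (q1 - A1) + (Complex.I • q2 - Complex.I • A2) by abel] at this
      have h2 : q1 - A1 = -(Complex.I • q2 - Complex.I • A2) := by
        rw [← sub_eq_zero]
        rw [sub_neg_eq_add]
        exact this
      rw [h2]
    have hNX : (q1 - A1)ᴴ * X + X * (q1 - A1) = 0 := by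
      rw [Matrix.conjTranspose_sub, Matrix.sub_mul, Matrix.mul_sub]
      rw [show q1ᴴ * X - A1ᴴ * X + (X * q1 - X * A1)
          = (q1ᴴ * X + X * q1) - (A1ᴴ * X + X * A1) by abel, hq1X, hA1X, sub_zero]
    have hMX2 : Mᴴ * X - X * M = 0 := by
      rw [hq1A1] at hNX
      rw [Matrix.conjTranspose_neg, Matrix.conjTranspose_smul] at hNX
      have hsI : star Complex.I = -Complex.I := Complex.conj_I
      rw [hsI] at hNX
      rw [Matrix.neg_mul, Matrix.smul_mul, Matrix.mul_neg, Matrix.mul_smul] at hNX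
      have : Complex.I • (Mᴴ * X - X * M) = 0 := by
        rw [smul_sub]
        rw [← hNX]
        module
      have h' := smul_eq_zero.mp this
      rcases h' with h' | h'
      · exact absurd h' Complex.I_ne_zero
      · exact h'
    have hXM : X * M = 0 := by
      have h : (X * M) + (X * M) = 0 := by
        have := sub_eq_zero.mp (sub_eq_zero.mpr (hMX.trans hMX2.symm))
        -- (Mᴴ X + X M) - (Mᴴ X - X M) = 2 X M
        calc (X * M) + (X * M) = (Mᴴ * X + X * M) - (Mᴴ * X - X * M) := by abel
        _ = 0 - 0 := by rw [hMX, hMX2]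
        _ = 0 := by simp
      have h2 : (2 : ℂ) • (X * M) = 0 := by
        rw [two_smul]; exact h
      rcases smul_eq_zero.mp h2 with h' | h'
      · norm_num at h'
      · exact h'
    have hM0 : M = 0 := by
      have : B * (X * M) = 0 := by rw [hXM, Matrix.mul_zero]
      rw [← Matrix.mul_assoc, hBX, Matrix.neg_mul, Matrix.one_mul, neg_eq_zero] at this
      exact this
    have hq2 : q2 = A2 := sub_eq_zero.mp hM0
    have hq1 : q1 = A1 := by
      have := hq1A1
      rw [hMdef, hq2, sub_self, smul_zero, neg_zero] at this
      exact sub_eq_zero.mp this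
    exact Prod.ext hq1 hq2
end
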